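/- arXiv:2001.07767 — 5 statements merged into one kernel-verified Lean document; each statement's English description precedes it below -/
import Mathlib

section
/- Under the standing assumptions, for all t in the interval (b−δ, b+δ) one has Re ζ(t) ≍ α² + β² as b → +∞, where ζ(t) = −λ² − 2λa(t) − q(t) with λ = −α + iβ and α = a(b). -/
open Filter Set

theorem stmt_4 (a q β : ℝ → ℝ) (ν ε : ℝ) (hν : -1 ≤ ν) (hε : 0 < ε)
    (ha : ContDiff ℝ 2 a) (hq : ContDiff ℝ 1 q)
    (hapos : ∀ᶠ x in atTop, 0 ≤ a x) (hqpos : ∀ᶠ x in atTop, 0 ≤ q x)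
    (ha' : ∀ᶠ x in atTop, 0 < deriv a x)
    (hainf : Tendsto a atTop atTop)
    (hactrl : ∃ Ca > 0, ∀ᶠ x in atTop,
      |deriv a x| ≤ Ca * x ^ ν * a x ∧ |deriv (deriv a) x| ≤ Ca * x ^ (2 * ν) * a x)
    (hβ : ∀ b, 0 < β b)
    (hq0 : (fun b => sSup (q '' Set.Icc (b - b ^ (-ν - ε)) (b + b ^ (-ν - ε))))
      =o[atTop] fun b => (a b) ^ 2 + (β b) ^ 2) :
    ∃ c C : ℝ, 0 < c ∧ c ≤ C ∧ ∀ᶠ b in atTop,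
      ∀ t ∈ Set.Ioo (b - b ^ (-ν - ε)) (b + b ^ (-ν - ε)),
        let lam : ℂ := -(a b : ℂ) + (β b : ℂ) * Complex.I
        let zeta : ℂ := -lam ^ 2 - 2 * lam * (a t : ℂ) - (q t : ℂ)
        c * ((a b) ^ 2 + (β b) ^ 2) ≤ zeta.re ∧
          zeta.re ≤ C * ((a b) ^ 2 + (β b) ^ 2) := by
  obtain ⟨Ca, hCa, hctrl⟩ := hactrl
  set r : ℝ := -ν - ε with hrdef
  have hrlt : r < 1 := by simp only [hrdef]; linarith
  -- threshold x₀
  obtain ⟨x₀, hx₀⟩ : ∃ x₀ : ℝ, ∀ x ≥ x₀, 1 ≤ a x ∧ 0 ≤ q x ∧ |deriv a x| ≤ Ca * x ^ ν * a x := by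
    have h1 := (hainf.eventually_ge_atTop 1).and (hqpos.and hctrl)
    obtain ⟨N, hN⟩ := eventually_atTop.mp h1
    exact ⟨N, fun x hx => ⟨(hN x hx).1, (hN x hx).2.1, (hN x hx).2.2.1⟩⟩
  set K : ℝ := (2 : ℝ) ^ |ν| with hKdef
  have hK0 : 0 < K := Real.rpow_pos_of_pos (by norm_num) _
  refine ⟨1/4, 5/4, by norm_num, by norm_num, ?_⟩
  -- eventual conditions on b
  have hb1 : ∀ᶠ b in (atTop : Filter ℝ), (1 : ℝ) ≤ b := eventually_ge_atTop 1
  have hb2 : ∀ᶠ b in (atTop : Filter ℝ), b ^ (r - 1) ≤ 1/2 := by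
    have := (tendsto_rpow_neg_atTop (y := 1 - r) (by linarith)).eventually
      (eventually_le_nhds (show (0:ℝ) < 1/2 by norm_num))
    simpa [neg_sub] using this
  have hb3 : ∀ᶠ b in (atTop : Filter ℝ), 2 * x₀ ≤ b := eventually_ge_atTop _
  have hb4 : ∀ᶠ b in (atTop : Filter ℝ), Ca * K * b ^ (-ε) ≤ 1/9 := by
    have := (tendsto_rpow_neg_atTop hε).const_mul (Ca * K)
    rw [mul_zero] at this
    exact this.eventually (eventually_le_nhds (by norm_num))
  have hb5 : ∀ᶠ b in (atTop : Filter ℝ),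
      sSup (q '' Set.Icc (b - b ^ r) (b + b ^ r)) ≤ (1/2) * ((a b)^2 + (β b)^2) := by
    filter_upwards [hq0.def (show (0:ℝ) < 1/2 by norm_num)] with b hb
    have h1 : (0:ℝ) ≤ (a b)^2 + (β b)^2 := by positivity
    calc sSup (q '' Set.Icc (b - b ^ r) (b + b ^ r))
        ≤ ‖sSup (q '' Set.Icc (b - b ^ r) (b + b ^ r))‖ := le_abs_self _
      _ ≤ 1/2 * ‖(a b)^2 + (β b)^2‖ := hb
      _ = 1/2 * ((a b)^2 + (β b)^2) := by rw [Real.norm_eq_abs, abs_of_nonneg h1]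
  filter_upwards [hb1, hb2, hb3, hb4, hb5] with b hb1 hb2 hb3 hb4 hb5
  have hbpos : (0:ℝ) < b := by linarith
  set δ : ℝ := b ^ r with hδdef
  have hδpos : 0 < δ := Real.rpow_pos_of_pos hbpos _
  have hδle : δ ≤ b / 2 := by
    have : δ = b ^ (r - 1) * b := by
      rw [hδdef, ← Real.rpow_add_one hbpos.ne' (r-1)]; norm_num
    rw [this]
    calc b ^ (r-1) * b ≤ (1/2) * b := by
          apply mul_le_mul_of_nonneg_right hb2 (le_of_lt hbpos)
      _ = b / 2 := by ring
  have hIsub : Set.Icc (b - δ) (b + δ) ⊆ Set.Icc (b/2) (2*b) := by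
    apply Set.Icc_subset_Icc <;> linarith
  have hIx₀ : ∀ x ∈ Set.Icc (b - δ) (b + δ), x₀ ≤ x := by
    intro x hx
    have := (hIsub hx).1
    linarith
  -- bound on x^ν for x in the interval
  have hxν : ∀ x ∈ Set.Icc (b - δ) (b + δ), x ^ ν ≤ K * b ^ ν := by
    intro x hx
    obtain ⟨hx1, hx2⟩ := hIsub hx
    have hxpos : 0 < x := by linarith
    rcases le_or_gt 0 ν with hν0 | hν0
    · calc x ^ ν ≤ (2*b) ^ ν := Real.rpow_le_rpow (le_of_lt hxpos) hx2 hν0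
        _ = 2 ^ ν * b ^ ν := Real.mul_rpow (by norm_num) (le_of_lt hbpos)
        _ ≤ K * b ^ ν := by
            apply mul_le_mul_of_nonneg_right _ (Real.rpow_pos_of_pos hbpos ν).le
            exact Real.rpow_le_rpow_of_exponent_le (by norm_num) (le_abs_self ν)
    · calc x ^ ν ≤ (b/2) ^ ν := by
            exact Real.rpow_le_rpow_of_nonpos (by linarith) hx1 (le_of_lt hν0)
        _ = b ^ ν * (2:ℝ)⁻¹ ^ ν := by
            rw [div_eq_mul_inv, Real.mul_rpow (le_of_lt hbpos) (by norm_num)]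
        _ = b ^ ν * 2 ^ (-ν) := by
            rw [Real.inv_rpow (by norm_num : (0:ℝ) ≤ 2), ← Real.rpow_neg (by norm_num : (0:ℝ) ≤ 2)]
        _ ≤ b ^ ν * K := by
            apply mul_le_mul_of_nonneg_left _ (Real.rpow_pos_of_pos hbpos ν).le
            exact Real.rpow_le_rpow_of_exponent_le (by norm_num) (neg_le_abs ν)
        _ = K * b ^ ν := mul_comm _ _
  have hdiffa : Differentiable ℝ a := ha.differentiable (by norm_num)
  -- mean value on log ∘ a
  have hlog : ∀ t ∈ Set.Icc (b - δ) (b + δ),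
      |Real.log (a t) - Real.log (a b)| ≤ Ca * (K * b ^ ν) * |t - b| := by
    intro t ht
    have hbmem : b ∈ Set.Icc (b - δ) (b + δ) := by
      constructor <;> linarith
    have key := (convex_Icc (b - δ) (b + δ)).norm_image_sub_le_of_norm_hasDerivWithin_le
      (f := fun x => Real.log (a x)) (f' := fun x => (a x)⁻¹ * deriv a x)
      (C := Ca * (K * b ^ ν)) ?_ ?_ hbmem ht
    · simpa [Real.norm_eq_abs] using key
    · intro x hx
      have hax : 1 ≤ a x := (hx₀ x (hIx₀ x hx)).1
      have : HasDerivAt (fun x => Real.log (a x)) ((a x)⁻¹ * deriv a x) x := by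
        exact (Real.hasDerivAt_log (by linarith)).comp x (hdiffa x).hasDerivAt
      exact this.hasDerivWithinAt
    · intro x hx
      have hax : 1 ≤ a x := (hx₀ x (hIx₀ x hx)).1
      have hax0 : 0 < a x := by linarith
      have hctl := (hx₀ x (hIx₀ x hx)).2.2
      rw [Real.norm_eq_abs, abs_mul, abs_inv, abs_of_pos hax0]
      calc (a x)⁻¹ * |deriv a x| ≤ (a x)⁻¹ * (Ca * x ^ ν * a x) := by
            apply mul_le_mul_of_nonneg_left hctl (by positivity)
        _ = Ca * x ^ ν := by field_simp
        _ ≤ Ca * (K * b ^ ν) := by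
            apply mul_le_mul_of_nonneg_left (hxν x hx) (le_of_lt hCa)
  intro t ht lam zeta
  have htI : t ∈ Set.Icc (b - δ) (b + δ) := Set.mem_Icc_of_Ioo ht
  have hαb : 1 ≤ a b := (hx₀ b (hIx₀ b (by constructor <;> [linarith; linarith]))).1
  have hqt0 : 0 ≤ q t := (hx₀ t (hIx₀ t htI)).2.1
  -- small log oscillation
  have hosc : |Real.log (a t) - Real.log (a b)| ≤ 1/9 := by
    calc |Real.log (a t) - Real.log (a b)| ≤ Ca * (K * b ^ ν) * |t - b| := hlog t htI
      _ ≤ Ca * (K * b ^ ν) * δ := by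
          apply mul_le_mul_of_nonneg_left _ (by positivity)
          rw [abs_le]; constructor <;> [linarith [ht.1]; linarith [ht.2]]
      _ = Ca * K * b ^ (-ε) := by
          rw [hδdef, show Ca * (K * b ^ ν) * b ^ r = Ca * K * (b ^ ν * b ^ r) by ring,
            ← Real.rpow_add hbpos, show ν + r = -ε by rw [hrdef]; ring]
      _ ≤ 1/9 := hb4
  have hat1 : 1 ≤ a t := (hx₀ t (hIx₀ t htI)).1
  have hatpos : 0 < a t := by linarith
  have habpos : (0:ℝ) < a b := by linarith
  have hexpl : Real.exp (-(1/9)) ≥ 8/9 := by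
    have := Real.add_one_le_exp (-(1/9) : ℝ)
    linarith
  -- upper bound on a t
  have hup : a t ≤ (9/8) * a b := by
    have h1 : Real.log (a t) ≤ Real.log (a b) + 1/9 := by
      have := (abs_le.mp hosc).2; linarith
    have h2 : a t ≤ Real.exp (Real.log (a b) + 1/9) := by
      rw [← Real.exp_log hatpos]
      exact Real.exp_le_exp.mpr h1
    rw [Real.exp_add, Real.exp_log habpos] at h2
    have h3 : Real.exp (1/9 : ℝ) ≤ 9/8 := by
      rw [show (1/9 : ℝ) = -(-(1/9)) by ring, Real.exp_neg]
      rw [inv_le_comm₀ (Real.exp_pos _) (by norm_num)]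
      linarith
    calc a t ≤ a b * Real.exp (1/9) := h2
      _ ≤ a b * (9/8) := mul_le_mul_of_nonneg_left h3 (le_of_lt habpos)
      _ = (9/8) * a b := mul_comm _ _
  -- lower bound on a t
  have hlo : (8/9) * a b ≤ a t := by
    have h1 : Real.log (a b) - 1/9 ≤ Real.log (a t) := by
      have := (abs_le.mp hosc).1; linarith
    have h2 : Real.exp (Real.log (a b) + -(1/9)) ≤ a t := by
      rw [← Real.exp_log hatpos]
      apply Real.exp_le_exp.mpr; linarith
    rw [Real.exp_add, Real.exp_log habpos] at h2
    calc (8/9) * a b = a b * (8/9) := mul_comm _ _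
      _ ≤ a b * Real.exp (-(1/9)) := mul_le_mul_of_nonneg_left hexpl (le_of_lt habpos)
      _ ≤ a t := h2
  -- q bound
  have hqt : q t ≤ (1/2) * ((a b)^2 + (β b)^2) := by
    refine le_trans ?_ hb5
    apply le_csSup
    · exact (isCompact_Icc.image hq.continuous).bddAbove
    · exact Set.mem_image_of_mem q htI
  -- compute real part
  have hre : zeta.re = (β b)^2 - (a b)^2 + 2 * (a b) * (a t) - q t := by
    simp only [zeta, lam]
    simp [Complex.ext_iff, Complex.add_re, Complex.mul_re, Complex.mul_im, pow_two]
  rw [hre]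
  constructor
  · nlinarith [sq_nonneg (a b), sq_nonneg (β b), mul_le_mul_of_nonneg_left hlo (le_of_lt habpos)]
  · nlinarith [sq_nonneg (β b), mul_le_mul_of_nonneg_left hup (le_of_lt habpos)]
end

section
/- Under the standing assumptions, for all t ∈ (b−δ, b+δ) one has (Re ζ(t))^{1/2} + |Im ζ(t)|^{1/2} ≍ α + β as b → +∞, where Im ζ(t) = 2β(α − a(t)). -/
open Filter Set

lemma stmt5_zre (α B A Q : ℝ) : (-(-(α:ℂ) + B*Complex.I)^2 - 2*(-(α:ℂ)+B*Complex.I)*A - (Q:ℂ)).re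
    = B^2 - α^2 + 2*α*A - Q := by
  simp [Complex.add_re, Complex.mul_re, pow_two]

lemma stmt5_zim (α B A Q : ℝ) : (-(-(α:ℂ) + B*Complex.I)^2 - 2*(-(α:ℂ)+B*Complex.I)*A - (Q:ℂ)).im
    = 2*B*(α - A) := by
  simp [pow_two]; ring

lemma stmt5_rpow_bound {ν b x : ℝ} (hb : 0 < b) (hx1 : b/2 ≤ x) (hx2 : x ≤ 2*b) :
    x ^ ν ≤ 2 ^ |ν| * b ^ ν := by
  rcases le_or_gt 0 ν with h | h
  · rw [abs_of_nonneg h]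
    calc x ^ ν ≤ (2*b) ^ ν := Real.rpow_le_rpow (by linarith) hx2 h
      _ = 2 ^ ν * b ^ ν := Real.mul_rpow (by norm_num) hb.le
  · rw [abs_of_neg h]
    calc x ^ ν ≤ (b/2) ^ ν := Real.rpow_le_rpow_of_nonpos (by linarith) hx1 h.le
      _ = b ^ ν / 2 ^ ν := Real.div_rpow hb.le (by norm_num : (0:ℝ) ≤ 2) ν
      _ = 2 ^ (-ν) * b ^ ν := by
          rw [Real.rpow_neg (by norm_num)]; ring

lemma stmt5_exp_fifth : Real.exp (1/5) ≤ 5/4 := by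
  have h := Real.add_one_le_exp (-(1/5))
  have h2 : (0:ℝ) < Real.exp (-(1/5)) := Real.exp_pos _
  rw [show (1/5:ℝ) = -(-(1/5)) by ring, Real.exp_neg]
  rw [inv_le_comm₀ (by positivity) (by norm_num)]
  linarith

lemma stmt5_re_bounds (α B A Q : ℝ) (hα : 1 ≤ α) (hB : 0 < B)
    (hA1 : -(α/4) ≤ A - α) (hA2 : A - α ≤ α/4) (hQ0 : 0 ≤ Q)
    (hQ : Q ≤ 1/4 * (α^2 + B^2)) :
    (1/8) * (α + B)^2 ≤ B^2 - α^2 + 2*α*A - Q ∧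
      B^2 - α^2 + 2*α*A - Q ≤ ((3/2) * (α + B))^2 := by
  constructor <;> nlinarith [sq_nonneg (α - B), sq_nonneg (α + B)]

lemma stmt5_im_bound (α B A : ℝ) (hα : 1 ≤ α) (hB : 0 < B) (hA : |A - α| ≤ α/4) :
    |2 * B * (α - A)| ≤ ((1/2) * (α + B))^2 := by
  have h1 : |2 * B * (α - A)| = 2 * B * |α - A| := by
    rw [abs_mul, abs_of_pos (by positivity : (0:ℝ) < 2 * B)]
  have h2 : |α - A| ≤ α / 4 := by rwa [abs_sub_comm] at hA
  have h3 : 0 ≤ |α - A| := abs_nonneg _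
  rw [h1]
  nlinarith [sq_nonneg (α - B)]

theorem stmt_5 (a q β : ℝ → ℝ) (ν ε : ℝ) (hν : -1 ≤ ν) (hε : 0 < ε)
    (ha : ContDiff ℝ 2 a) (hq : ContDiff ℝ 1 q)
    (hapos : ∀ᶠ x in atTop, 0 ≤ a x) (hqpos : ∀ᶠ x in atTop, 0 ≤ q x)
    (ha' : ∀ᶠ x in atTop, 0 < deriv a x)
    (hainf : Tendsto a atTop atTop)
    (hactrl : ∃ Ca > 0, ∀ᶠ x in atTop,
      |deriv a x| ≤ Ca * x ^ ν * a x ∧ |deriv (deriv a) x| ≤ Ca * x ^ (2 * ν) * a x)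
    (hβ : ∀ b, 0 < β b)
    (hq0 : (fun b => sSup (q '' Set.Icc (b - b ^ (-ν - ε)) (b + b ^ (-ν - ε))))
      =o[atTop] fun b => (a b) ^ 2 + (β b) ^ 2) :
    ∃ c C : ℝ, 0 < c ∧ c ≤ C ∧ ∀ᶠ b in atTop,
      ∀ t ∈ Set.Ioo (b - b ^ (-ν - ε)) (b + b ^ (-ν - ε)),
        let lam : ℂ := -(a b : ℂ) + (β b : ℂ) * Complex.I
        let zeta : ℂ := -lam ^ 2 - 2 * lam * (a t : ℂ) - (q t : ℂ)
        c * (a b + β b) ≤ Real.sqrt zeta.re + Real.sqrt |zeta.im| ∧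
          Real.sqrt zeta.re + Real.sqrt |zeta.im| ≤ C * (a b + β b) := by
  obtain ⟨Ca, hCa, hctrl⟩ := hactrl
  refine ⟨1/3, 2, by norm_num, by norm_num, ?_⟩
  have hev : ∀ᶠ x in atTop, 0 ≤ q x ∧ |deriv a x| ≤ Ca * x ^ ν * a x ∧ 1 ≤ a x := by
    filter_upwards [hqpos, hctrl, hainf.eventually_ge_atTop 1] with x h2 h3 h4
    exact ⟨h2, h3.1, h4⟩
  obtain ⟨x0, hx0⟩ := eventually_atTop.mp hev
  -- eventual smallness conditions on b
  have hE2 : ∀ᶠ b : ℝ in atTop, b ^ (-(ν + ε + 1)) ≤ 1/2 :=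
    (tendsto_rpow_neg_atTop (show (0:ℝ) < ν + ε + 1 by linarith)).eventually (eventually_le_nhds (by norm_num : (0:ℝ) < 1/2))
  have hE3 : ∀ᶠ b in atTop, Ca * 2 ^ |ν| * b ^ (-ε) ≤ 1/5 := by
    have h0 : Tendsto (fun b : ℝ => Ca * 2 ^ |ν| * b ^ (-ε)) atTop (nhds 0) := by
      simpa using (tendsto_rpow_neg_atTop hε).const_mul (Ca * 2 ^ |ν|)
    exact h0.eventually (eventually_le_nhds (by norm_num : (0:ℝ) < 1/5))
  filter_upwards [eventually_ge_atTop (max (max x0 (2*x0)) 1), hE2, hE3,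
    hq0.def (by norm_num : (0:ℝ) < 1/4)] with b hb h2 h3 h4
  intro t ht lam zeta
  have hb1 : (1:ℝ) ≤ b := le_trans (le_max_right _ _) hb
  have hbx0 : x0 ≤ b := le_trans (le_trans (le_max_left _ _) (le_max_left _ _)) hb
  have hb2x0 : 2*x0 ≤ b := le_trans (le_trans (le_max_right _ _) (le_max_left _ _)) hb
  have hbpos : 0 < b := lt_of_lt_of_le one_pos hb1
  set δ := b ^ (-ν - ε) with hδdef
  have hδpos : 0 < δ := Real.rpow_pos_of_pos hbpos _
  have hδhalf : δ ≤ b/2 := by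
    have he : δ = b * b ^ (-(ν + ε + 1)) := by
      rw [hδdef, show -ν - ε = 1 + (-(ν + ε + 1)) by ring, Real.rpow_add hbpos, Real.rpow_one]
    rw [he]
    calc b * b ^ (-(ν + ε + 1)) ≤ b * (1/2) := by
          exact mul_le_mul_of_nonneg_left h2 hbpos.le
      _ = b / 2 := by ring
  -- the interval
  set s : Set ℝ := Icc (b - δ) (b + δ) with hsdef
  have hsub : ∀ x ∈ s, b/2 ≤ x ∧ x ≤ 2*b := by
    intro x hx
    exact ⟨by have := hx.1; linarith, by have := hx.2; linarith⟩
  have hsx0 : ∀ x ∈ s, x0 ≤ x := by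
    intro x hx
    have := (hsub x hx).1; linarith
  set K := Ca * 2 ^ |ν| * b ^ ν with hKdef
  -- derivative bound for log ∘ a on s
  have hder : ∀ x ∈ s, HasDerivWithinAt (fun y => Real.log (a y)) (deriv a x / a x) s x := by
    intro x hx
    have h1 : (1:ℝ) ≤ a x := (hx0 x (hsx0 x hx)).2.2
    exact (((ha.differentiable (by norm_num)).differentiableAt.hasDerivAt).log
      (by linarith)).hasDerivWithinAt
  have hderb : ∀ x ∈ s, ‖deriv a x / a x‖ ≤ K := by
    intro x hx
    obtain ⟨hx1, hx2⟩ := hsub x hx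
    obtain ⟨hq0x, hax, ha1⟩ := hx0 x (hsx0 x hx)
    have hapx : 0 < a x := by linarith
    rw [Real.norm_eq_abs, abs_div, abs_of_pos hapx, div_le_iff₀ hapx]
    calc |deriv a x| ≤ Ca * x ^ ν * a x := hax
      _ ≤ Ca * (2 ^ |ν| * b ^ ν) * a x := by
          have hxb := stmt5_rpow_bound (ν := ν) hbpos hx1 hx2
          have hax0 : (0:ℝ) ≤ a x := by linarith
          exact mul_le_mul_of_nonneg_right (mul_le_mul_of_nonneg_left hxb hCa.le) hax0
      _ = K * a x := by rw [hKdef]; ring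
  have hbmem : b ∈ s := ⟨by linarith, by linarith⟩
  have htmem : t ∈ s := ⟨ht.1.le, ht.2.le⟩
  have hmvt := Convex.norm_image_sub_le_of_norm_hasDerivWithin_le hder hderb
    (convex_Icc _ _) hbmem htmem
  have hKδ : K * δ ≤ 1/5 := by
    have : K * δ = Ca * 2 ^ |ν| * b ^ (-ε) := by
      rw [hKdef, hδdef, mul_assoc, ← Real.rpow_add hbpos]
      ring_nf
    rw [this]; exact h3
  have hlog : |Real.log (a t) - Real.log (a b)| ≤ 1/5 := by
    have h1 : ‖t - b‖ ≤ δ := by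
      rw [Real.norm_eq_abs, abs_le]
      exact ⟨by have := ht.1; linarith, by have := ht.2; linarith⟩
    have h2' : ‖Real.log (a t) - Real.log (a b)‖ ≤ K * δ := by
      calc ‖Real.log (a t) - Real.log (a b)‖ ≤ K * ‖t - b‖ := hmvt
        _ ≤ K * δ := by
            have hK0 : 0 ≤ K := by
              have := Real.rpow_pos_of_pos hbpos ν
              have h2p : (0:ℝ) < 2 ^ |ν| := Real.rpow_pos_of_pos (by norm_num) _
              positivity
            exact mul_le_mul_of_nonneg_left h1 hK0
    rw [Real.norm_eq_abs] at h2'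
    linarith [hKδ]
  -- |a t - a b| ≤ a b / 4
  have hab1 : (1:ℝ) ≤ a b := (hx0 b hbx0).2.2
  have hat1 : (1:ℝ) ≤ a t := (hx0 t (hsx0 t htmem)).2.2
  have habpos : 0 < a b := by linarith
  have hatpos : 0 < a t := by linarith
  have hclose : |a t - a b| ≤ a b / 4 := by
    have hub : a t ≤ a b * (5/4) := by
      have h1 : Real.log (a t) ≤ Real.log (a b) + 1/5 := by
        have := abs_le.1 hlog; linarith [this.2]
      calc a t = Real.exp (Real.log (a t)) := (Real.exp_log hatpos).symm
        _ ≤ Real.exp (Real.log (a b) + 1/5) := Real.exp_le_exp.2 h1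
        _ = a b * Real.exp (1/5) := by rw [Real.exp_add, Real.exp_log habpos]
        _ ≤ a b * (5/4) := mul_le_mul_of_nonneg_left stmt5_exp_fifth habpos.le
    have hlb : a b ≤ a t * (5/4) := by
      have h1 : Real.log (a b) ≤ Real.log (a t) + 1/5 := by
        have := abs_le.1 hlog; linarith [this.1]
      calc a b = Real.exp (Real.log (a b)) := (Real.exp_log habpos).symm
        _ ≤ Real.exp (Real.log (a t) + 1/5) := Real.exp_le_exp.2 h1
        _ = a t * Real.exp (1/5) := by rw [Real.exp_add, Real.exp_log hatpos]
        _ ≤ a t * (5/4) := mul_le_mul_of_nonneg_left stmt5_exp_fifth hatpos.le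
    rw [abs_le]; constructor <;> nlinarith
  -- q bounds
  have hqt0 : 0 ≤ q t := (hx0 t (hsx0 t htmem)).1
  have hqts : q t ≤ sSup (q '' s) :=
    le_csSup ((isCompact_Icc.image hq.continuous).bddAbove) ⟨t, htmem, rfl⟩
  have hqtb : q t ≤ (1/4) * (a b ^ 2 + β b ^ 2) := by
    have h4' := h4
    simp only [Real.norm_eq_abs] at h4'
    have habs : |a b ^ 2 + β b ^ 2| = a b ^ 2 + β b ^ 2 := abs_of_nonneg (by positivity)
    rw [habs] at h4'
    calc q t ≤ sSup (q '' s) := hqts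
      _ ≤ |sSup (q '' s)| := le_abs_self _
      _ ≤ (1/4) * (a b ^ 2 + β b ^ 2) := h4'
  -- compute re and im
  have hre : zeta.re = β b ^ 2 - a b ^ 2 + 2 * a b * a t - q t := by
    simp only [zeta, lam]; exact stmt5_zre (a b) (β b) (a t) (q t)
  have him : zeta.im = 2 * β b * (a b - a t) := by
    simp only [zeta, lam]; exact stmt5_zim (a b) (β b) (a t) (q t)
  -- final arithmetic
  have hAα : |a t - a b| ≤ a b / 4 := hclose
  have hAα' := abs_le.1 hAα
  obtain ⟨hre_lb, hre_ub⟩ := stmt5_re_bounds (a b) (β b) (a t) (q t) hab1 (hβ b)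
    hAα'.1 hAα'.2 hqt0 hqtb
  rw [← hre] at hre_lb hre_ub
  have him_ub : |zeta.im| ≤ ((1/2) * (a b + β b))^2 := by
    rw [him]
    have := stmt5_im_bound (a b) (β b) (a t) hab1 (hβ b) hAα
    calc |2 * β b * (a b - a t)| = |2 * β b * (a b - a t)| := rfl
      _ ≤ ((1/2) * (a b + β b))^2 := this
  have hX0 : (0:ℝ) < a b + β b := by have := hβ b; linarith
  have hs_ub : Real.sqrt zeta.re ≤ (3/2) * (a b + β b) := by
    have h := Real.sqrt_le_sqrt hre_ub
    rwa [Real.sqrt_sq (by positivity)] at h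
  have hr_ub : Real.sqrt |zeta.im| ≤ (1/2) * (a b + β b) := by
    have h := Real.sqrt_le_sqrt him_ub
    rwa [Real.sqrt_sq (by positivity)] at h
  have hs_lb : (1/3) * (a b + β b) ≤ Real.sqrt zeta.re := by
    have h : ((1/3) * (a b + β b))^2 ≤ zeta.re := by
      calc ((1/3) * (a b + β b))^2 = (1/9) * (a b + β b)^2 := by ring
        _ ≤ (1/8) * (a b + β b)^2 := by
            have := sq_nonneg (a b + β b); linarith
        _ ≤ zeta.re := hre_lb
    have h2 := Real.sqrt_le_sqrt h
    rwa [Real.sqrt_sq (by positivity)] at h2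
  have hr0 : 0 ≤ Real.sqrt |zeta.im| := Real.sqrt_nonneg _
  constructor
  · linarith
  · linarith
end

section
/- Under the standing assumptions, the basic WKB remainder R := i ξ λ ψ_{−1}'', where λψ_{−1}'' = (−2λa' − q')/(2√ζ), satisfies ‖R‖²_{∞,(b−δ,b+δ)} ≲ α² b^{2ν} + (q_b^{(1)})²/(α²+β²) as b → +∞. -/
/-!
On the window `|t - b| ≤ b ^ (-ν - ε)` every point is comparable to `b`, so `|a'| ≤ K b^ν a`
there: `log a` is `K b^ν`-Lipschitz, and since `K b^ν · b^(-ν-ε) = K b^(-ε) → 0`, `a t` and `a b`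
agree up to a factor `exp (1/4)`. With `q = o(α² + β²)` this gives `Re ζ(t) ≥ |λ|²/4`, hence
`|λψ''|² = |2λa' + q'|² / (4|ζ|) ≤ 8 |a'|² + 2 |q'|² / |λ|²`, and `|a' t| ≲ b^ν α`.
-/

open Filter Set

open Real in
lemma rpow_le_two_rpow_abs_mul_rpow {b x : ℝ} (ν : ℝ) (hb : 0 < b) (hx : x ∈ Icc (b / 2) (2 * b)) :
    x ^ ν ≤ 2 ^ |ν| * b ^ ν := by
  rcases le_or_gt 0 ν with hν | hν
  · calc x ^ ν ≤ (2 * b) ^ ν := rpow_le_rpow (by linarith [hx.1]) hx.2 hν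
      _ = 2 ^ ν * b ^ ν := mul_rpow zero_le_two hb.le
      _ ≤ 2 ^ |ν| * b ^ ν := by
        gcongr
        · exact one_le_two
        · exact le_abs_self ν
  · calc x ^ ν ≤ (b / 2) ^ ν := rpow_le_rpow_of_nonpos (by positivity) hx.1 hν.le
      _ = 2 ^ |ν| * b ^ ν := by
        rw [div_rpow hb.le zero_le_two, abs_of_neg hν, rpow_neg zero_le_two, div_eq_inv_mul]

lemma le_exp_mul_of_abs_deriv_le {f : ℝ → ℝ} {u v L s t : ℝ}
    (hf : ∀ x ∈ Icc u v, DifferentiableAt ℝ f x) (hpos : ∀ x ∈ Icc u v, 0 < f x)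
    (hderiv : ∀ x ∈ Icc u v, |deriv f x| ≤ L * f x) (hs : s ∈ Icc u v) (ht : t ∈ Icc u v) :
    f t ≤ Real.exp (L * |t - s|) * f s := by
  have hlog : ‖Real.log (f t) - Real.log (f s)‖ ≤ L * ‖t - s‖ := by
    refine (convex_Icc u v).norm_image_sub_le_of_norm_hasDerivWithin_le
      (fun x hx => ((hf x hx).hasDerivAt.log (hpos x hx).ne').hasDerivWithinAt)
      (fun x hx => ?_) hs ht
    rw [Real.norm_eq_abs, abs_div, abs_of_pos (hpos x hx), div_le_iff₀ (hpos x hx)]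
    exact hderiv x hx
  rw [Real.norm_eq_abs, Real.norm_eq_abs, abs_le] at hlog
  calc f t = Real.exp (Real.log (f t)) := (Real.exp_log (hpos t ht)).symm
    _ ≤ Real.exp (L * |t - s| + Real.log (f s)) := Real.exp_le_exp.2 (by linarith [hlog.2])
    _ = Real.exp (L * |t - s|) * f s := by rw [Real.exp_add, Real.exp_log (hpos s hs)]

lemma eventually_forall_Icc_half_two {P : ℝ → Prop} (hP : ∀ᶠ x in atTop, P x) :
    ∀ᶠ b in atTop, ∀ x ∈ Icc (b / 2) (2 * b), P x := by
  obtain ⟨x₀, hx₀⟩ := eventually_atTop.1 hP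
  filter_upwards [eventually_ge_atTop (2 * x₀)] with b hb x hx
  exact hx₀ x (by linarith [hx.1])

lemma eventually_Icc_sub_add_rpow_subset {r : ℝ} (hr : r < 1) :
    ∀ᶠ b : ℝ in atTop, Icc (b - b ^ r) (b + b ^ r) ⊆ Icc (b / 2) (2 * b) := by
  have hsmall : Tendsto (fun b : ℝ => b ^ (r - 1)) atTop (nhds 0) := by
    simpa using tendsto_rpow_neg_atTop (show 0 < 1 - r by linarith)
  filter_upwards [hsmall.eventually (eventually_le_nhds one_half_pos), eventually_gt_atTop 0]
    with b hb hb0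
  have hbr : b ^ r ≤ b / 2 := by
    calc b ^ r = b ^ (r - 1) * b := by rw [Real.rpow_sub_one hb0.ne', div_mul_cancel₀ _ hb0.ne']
      _ ≤ 1 / 2 * b := by gcongr
      _ = b / 2 := by ring
  exact Icc_subset_Icc (by linarith) (by linarith)

lemma tendsto_mul_rpow_mul_rpow_sub (c ν : ℝ) {ε : ℝ} (hε : 0 < ε) :
    Tendsto (fun b : ℝ => c * b ^ ν * b ^ (-ν - ε)) atTop (nhds 0) := by
  have h := (tendsto_rpow_neg_atTop hε).const_mul c
  rw [mul_zero] at h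
  refine h.congr' ?_
  filter_upwards [eventually_gt_atTop 0] with b hb
  rw [mul_assoc, ← Real.rpow_add hb]
  ring_nf

lemma eventually_abs_deriv_le_on_window {a : ℝ → ℝ} {Ca ν r : ℝ} (hr : r < 1) (hCa : 0 ≤ Ca)
    (hpos : ∀ᶠ x in atTop, 0 < a x) (hctrl : ∀ᶠ x in atTop, |deriv a x| ≤ Ca * x ^ ν * a x) :
    ∀ᶠ b in atTop, ∀ x ∈ Icc (b - b ^ r) (b + b ^ r),
      0 < a x ∧ |deriv a x| ≤ Ca * 2 ^ |ν| * b ^ ν * a x := by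
  filter_upwards [eventually_Icc_sub_add_rpow_subset hr,
    eventually_forall_Icc_half_two (hpos.and hctrl), eventually_gt_atTop 0]
    with b hsub hgood hb x hx
  obtain ⟨hax, hdax⟩ := hgood x (hsub hx)
  refine ⟨hax, hdax.trans ?_⟩
  calc Ca * x ^ ν * a x ≤ Ca * (2 ^ |ν| * b ^ ν) * a x := by
        gcongr
        exact rpow_le_two_rpow_abs_mul_rpow ν hb (hsub hx)
    _ = Ca * 2 ^ |ν| * b ^ ν * a x := by ring

lemma three_mul_exp_quarter_le_four : 3 * Real.exp (1 / 4) ≤ 4 := by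
  have h := Real.add_one_le_exp (-(1 / 4))
  rw [Real.exp_neg] at h
  nlinarith [Real.exp_pos (1 / 4), mul_inv_cancel₀ (Real.exp_pos (1 / 4)).ne']

lemma comparable_of_abs_deriv_le_on_Icc {a : ℝ → ℝ} {b d L t : ℝ} (ha : Differentiable ℝ a)
    (hd : 0 ≤ d) (hW : ∀ x ∈ Icc (b - d) (b + d), 0 < a x ∧ |deriv a x| ≤ L * a x)
    (hsmall : L * d ≤ 1 / 4) (ht : t ∈ Icc (b - d) (b + d)) :
    3 * a b ≤ 4 * a t ∧ |deriv a t| ≤ L * Real.exp (1 / 4) * a b := by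
  have hb : b ∈ Icc (b - d) (b + d) := ⟨by linarith, by linarith⟩
  have hL : 0 ≤ L := by
    by_contra! hL
    linarith [abs_nonneg (deriv a b), (hW b hb).2, mul_neg_of_neg_of_pos hL (hW b hb).1]
  have hdist : L * |t - b| ≤ 1 / 4 :=
    le_trans (by gcongr; exact abs_sub_le_iff.2 ⟨by linarith [ht.2], by linarith [ht.1]⟩) hsmall
  have hcomp {s u : ℝ} (hs : s ∈ Icc (b - d) (b + d)) (hu : u ∈ Icc (b - d) (b + d))
      (hsu : L * |u - s| ≤ 1 / 4) : a u ≤ Real.exp (1 / 4) * a s :=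
    (le_exp_mul_of_abs_deriv_le (fun x _ => ha x) (fun x hx => (hW x hx).1)
      (fun x hx => (hW x hx).2) hs hu).trans (by gcongr; exact (hW s hs).1.le)
  have hup := hcomp hb ht hdist
  have hdown := hcomp ht hb (abs_sub_comm b t ▸ hdist)
  constructor
  · nlinarith [(hW t ht).1, three_mul_exp_quarter_le_four]
  · calc |deriv a t| ≤ L * a t := (hW t ht).2
      _ ≤ L * (Real.exp (1 / 4) * a b) := by gcongr
      _ = L * Real.exp (1 / 4) * a b := by ring

lemma eventually_window_control {a : ℝ → ℝ} {Ca ν ε : ℝ} (hν : -1 ≤ ν) (hε : 0 < ε)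
    (ha : Differentiable ℝ a) (hpos : ∀ᶠ x in atTop, 0 < a x) (hCa : 0 ≤ Ca)
    (hctrl : ∀ᶠ x in atTop, |deriv a x| ≤ Ca * x ^ ν * a x) :
    ∀ᶠ b in atTop, ∀ t ∈ Icc (b - b ^ (-ν - ε)) (b + b ^ (-ν - ε)),
      3 * a b ≤ 4 * a t ∧ |deriv a t| ≤ Ca * 2 ^ |ν| * b ^ ν * Real.exp (1 / 4) * a b := by
  filter_upwards [eventually_abs_deriv_le_on_window (show -ν - ε < 1 by linarith) hCa hpos hctrl,
    (tendsto_mul_rpow_mul_rpow_sub (Ca * 2 ^ |ν|) ν hε).eventually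
      (eventually_le_nhds (show (0 : ℝ) < 1 / 4 by norm_num)),
    eventually_gt_atTop 0] with b hW hsmall hb t ht
  exact comparable_of_abs_deriv_le_on_Icc ha (Real.rpow_pos_of_pos hb _).le hW hsmall ht

section

open Complex

lemma norm_div_two_mul_cpow_half_sq (w z : ℂ) :
    ‖w / (2 * z ^ (1 / 2 : ℂ))‖ ^ 2 = ‖w‖ ^ 2 / (4 * ‖z‖) := by
  rcases eq_or_ne z 0 with rfl | hz
  · simp
  have hsqrt : (‖z‖ ^ (1 / 2 : ℝ)) ^ 2 = ‖z‖ := by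
    rw [← Real.rpow_natCast, ← Real.rpow_mul (norm_nonneg z)]; norm_num
  rw [norm_div, norm_mul, norm_cpow_of_ne_zero hz, div_pow, mul_pow]
  norm_num [hsqrt]

lemma sq_norm_neg_ofReal_add_ofReal_mul_I (x y : ℝ) : ‖-(x : ℂ) + y * I‖ ^ 2 = x ^ 2 + y ^ 2 := by
  rw [Complex.sq_norm, ← ofReal_neg, normSq_add_mul_I, neg_sq]

lemma norm_sq_div_four_le_re {lam : ℂ} {s p : ℝ} (hre : lam.re ≤ 0) (hs : 3 * -lam.re ≤ 4 * s)
    (hp : 4 * p ≤ ‖lam‖ ^ 2) : ‖lam‖ ^ 2 / 4 ≤ (-lam ^ 2 - 2 * lam * s - p).re := by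
  rw [Complex.sq_norm, normSq_apply] at hp ⊢
  simp only [sub_re, neg_re, pow_two, mul_re, re_ofNat, im_ofNat, ofReal_re, ofReal_im]
  nlinarith

lemma norm_sq_div_two_mul_cpow_half_le {lam z : ℂ} {A Q A₀ Q₀ : ℝ} (hA : |A| ≤ A₀) (hQ : |Q| ≤ Q₀)
    (hlam : lam ≠ 0) (hz : ‖lam‖ ^ 2 / 4 ≤ z.re) :
    ‖(-2 * lam * A - Q) / (2 * z ^ (1 / 2 : ℂ))‖ ^ 2 ≤ 8 * A₀ ^ 2 + 2 * Q₀ ^ 2 / ‖lam‖ ^ 2 := by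
  have hl : 0 < ‖lam‖ ^ 2 := by positivity
  have hnum : ‖-2 * lam * A - Q‖ ^ 2 ≤ 8 * ‖lam‖ ^ 2 * A₀ ^ 2 + 2 * Q₀ ^ 2 := by
    have h := norm_sub_le (-2 * lam * A) (Q : ℂ)
    simp only [norm_mul, norm_neg, norm_ofNat, norm_real, Real.norm_eq_abs] at h
    calc ‖-2 * lam * A - Q‖ ^ 2 ≤ (2 * ‖lam‖ * A₀ + Q₀) ^ 2 := by
          gcongr
          exact h.trans (by gcongr)
      _ ≤ 8 * ‖lam‖ ^ 2 * A₀ ^ 2 + 2 * Q₀ ^ 2 := by nlinarith [sq_nonneg (2 * ‖lam‖ * A₀ - Q₀)]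
  rw [norm_div_two_mul_cpow_half_sq]
  calc ‖-2 * lam * A - Q‖ ^ 2 / (4 * ‖z‖)
      ≤ (8 * ‖lam‖ ^ 2 * A₀ ^ 2 + 2 * Q₀ ^ 2) / ‖lam‖ ^ 2 := by
        gcongr
        linarith [re_le_norm z]
    _ = 8 * A₀ ^ 2 + 2 * Q₀ ^ 2 / ‖lam‖ ^ 2 := by field_simp

end

theorem stmt_9_general (a q β : ℝ → ℝ) (ν ε : ℝ) (hν : -1 ≤ ν) (hε : 0 < ε)
    (ha : ContDiff ℝ 2 a) (hq : ContDiff ℝ 1 q)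
    (hainf : Tendsto a atTop atTop)
    (hactrl : ∃ Ca > 0, ∀ᶠ x in atTop,
      |deriv a x| ≤ Ca * x ^ ν * a x ∧ |deriv (deriv a) x| ≤ Ca * x ^ (2 * ν) * a x)
    (hq0 : (fun b => sSup (q '' Set.Icc (b - b ^ (-ν - ε)) (b + b ^ (-ν - ε))))
      =o[atTop] fun b => (a b) ^ 2 + (β b) ^ 2) :
    ∃ C > 0, ∀ᶠ b in atTop,
      ∀ t ∈ Set.Ioo (b - b ^ (-ν - ε)) (b + b ^ (-ν - ε)),
        let lam : ℂ := -(a b : ℂ) + (β b : ℂ) * Complex.I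
        let zeta : ℂ := -lam ^ 2 - 2 * lam * (a t : ℂ) - (q t : ℂ)
        (‖
            ((-2 * lam * (Complex.ofReal (deriv a t)) - (Complex.ofReal (deriv q t)))
              / (2 * zeta ^ ((1 : ℂ) / 2)))‖) ^ 2
          ≤ C * ((a b) ^ 2 * b ^ (2 * ν)
              + (sSup ((fun t => |deriv q t|) ''
                  Set.Icc (b - b ^ (-ν - ε)) (b + b ^ (-ν - ε)))) ^ 2
                / ((a b) ^ 2 + (β b) ^ 2)) := by
  obtain ⟨Ca, hCa, hctrl⟩ := hactrl
  set M := Ca * 2 ^ |ν| * Real.exp (1 / 4)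
  refine ⟨8 * M ^ 2 + 2, by positivity, ?_⟩
  filter_upwards [eventually_window_control hν hε (ha.differentiable (by norm_num))
      (hainf.eventually_gt_atTop 0) hCa.le (hctrl.mono fun _ h => h.1),
    hainf.eventually_gt_atTop 0, hq0.def (show (0 : ℝ) < 1 / 4 by norm_num),
    eventually_gt_atTop 0] with b hwin hab hqsmall hb
  intro t ht lam zeta
  have htW := Ioo_subset_Icc_self ht
  obtain ⟨hat, hdat⟩ := hwin t htW
  have hlam : ‖lam‖ ^ 2 = a b ^ 2 + β b ^ 2 := sq_norm_neg_ofReal_add_ofReal_mul_I _ _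
  have hlam0 : lam ≠ 0 := fun h => by simp [h] at hlam; nlinarith
  have hqt : 4 * q t ≤ ‖lam‖ ^ 2 := by
    have h := hq.continuous.continuousOn.le_sSup_image_Icc htW
    rw [Real.norm_eq_abs, Real.norm_eq_abs, abs_of_pos (show 0 < a b ^ 2 + β b ^ 2 by positivity)]
      at hqsmall
    linarith [le_abs_self (sSup (q '' Icc (b - b ^ (-ν - ε)) (b + b ^ (-ν - ε))))]
  have hz : ‖lam‖ ^ 2 / 4 ≤ zeta.re :=
    norm_sq_div_four_le_re (by simp [lam]; linarith) (by simpa [lam] using hat) hqt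
  set Qs := sSup ((fun t => |deriv q t|) '' Icc (b - b ^ (-ν - ε)) (b + b ^ (-ν - ε)))
  calc _ ≤ 8 * (M * b ^ ν * a b) ^ 2 + 2 * Qs ^ 2 / ‖lam‖ ^ 2 :=
        norm_sq_div_two_mul_cpow_half_le (hdat.trans_eq (by ring))
          ((hq.continuous_deriv le_rfl).abs.continuousOn.le_sSup_image_Icc htW) hlam0 hz
    _ ≤ (8 * M ^ 2 + 2) * (a b ^ 2 * b ^ (2 * ν) + Qs ^ 2 / (a b ^ 2 + β b ^ 2)) := by
      rw [hlam, two_mul ν, Real.rpow_add hb]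
      have hY : 0 ≤ Qs ^ 2 / (a b ^ 2 + β b ^ 2) := by positivity
      have hX : 0 ≤ a b ^ 2 * (b ^ ν * b ^ ν) := by positivity
      linear_combination 2 * hX + 8 * mul_nonneg (sq_nonneg M) hY

theorem stmt_9 (a q β : ℝ → ℝ) (ν ε : ℝ) (hν : -1 ≤ ν) (hε : 0 < ε)
    (ha : ContDiff ℝ 2 a) (hq : ContDiff ℝ 1 q)
    (hapos : ∀ᶠ x in atTop, 0 ≤ a x) (hqpos : ∀ᶠ x in atTop, 0 ≤ q x)
    (ha' : ∀ᶠ x in atTop, 0 < deriv a x)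
    (hainf : Tendsto a atTop atTop)
    (hactrl : ∃ Ca > 0, ∀ᶠ x in atTop,
      |deriv a x| ≤ Ca * x ^ ν * a x ∧ |deriv (deriv a) x| ≤ Ca * x ^ (2 * ν) * a x)
    (hβ : ∀ b, 0 < β b)
    (hq0 : (fun b => sSup (q '' Set.Icc (b - b ^ (-ν - ε)) (b + b ^ (-ν - ε))))
      =o[atTop] fun b => (a b) ^ 2 + (β b) ^ 2) :
    ∃ C > 0, ∀ᶠ b in atTop,
      ∀ t ∈ Set.Ioo (b - b ^ (-ν - ε)) (b + b ^ (-ν - ε)),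
        let lam : ℂ := -(a b : ℂ) + (β b : ℂ) * Complex.I
        let zeta : ℂ := -lam ^ 2 - 2 * lam * (a t : ℂ) - (q t : ℂ)
        (‖
            ((-2 * lam * (Complex.ofReal (deriv a t)) - (Complex.ofReal (deriv q t)))
              / (2 * zeta ^ ((1 : ℂ) / 2)))‖) ^ 2
          ≤ C * ((a b) ^ 2 * b ^ (2 * ν)
              + (sSup ((fun t => |deriv q t|) ''
                  Set.Icc (b - b ^ (-ν - ε)) (b + b ^ (-ν - ε)))) ^ 2
                / ((a b) ^ 2 + (β b) ^ 2)) :=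
  stmt_9_general a q β ν ε hν hε ha hq hainf hactrl hq0
end

section
/- In the polynomial example a(x) = x^p (p > 0), q ≤ x^r, |q'| ≤ x^{r−1} on [1,∞), with b = α^{1/p}, δ = b^{1−ε}, and β(b) ≥ b^s with s > r/2 when r ≥ 2p (β arbitrary positive when r < 2p), the three conditions of the basic theorem hold: (i) (1/δ + δ^{−2}/(α+β)) exp(−c (β/(α+β)) a'(b) δ²) → 0 for every c>0; (ii) q_b^{(0)} = o(α²+β²); (iii) α² b^{−2} + q_b^{(1)} = o(α²+β²) as b → ∞. -/
open Filter Set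

private lemma rpow_littleO {u t : ℝ} (h : u < t) :
    (fun b : ℝ => b ^ u) =o[atTop] fun b => b ^ t := by
  rw [Asymptotics.isLittleO_iff_tendsto']
  · have hev : ∀ᶠ b : ℝ in atTop, b ^ (-(t - u)) = b ^ u / b ^ t := by
      filter_upwards [eventually_gt_atTop 0] with b hb
      rw [← Real.rpow_sub hb, neg_sub]
    exact Tendsto.congr' hev (tendsto_rpow_neg_atTop (by linarith))
  · filter_upwards [eventually_gt_atTop 0] with b hb h0
    exact absurd h0 (Real.rpow_pos_of_pos hb t).ne'

/-- if `x ∈ [b/2, 2b]` with `1 ≤ b` then `x ^ w ≤ 2 ^ |w| * b ^ w`. -/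
private lemma rpow_interval_bound {w b x : ℝ} (hb : 1 ≤ b) (hx : b / 2 ≤ x) (hx2 : x ≤ 2 * b) :
    x ^ w ≤ 2 ^ |w| * b ^ w := by
  have hb0 : (0 : ℝ) < b := by linarith
  have hx0 : (0 : ℝ) < x := by linarith
  rcases le_or_gt 0 w with hw | hw
  · calc x ^ w ≤ (2 * b) ^ w := Real.rpow_le_rpow hx0.le hx2 hw
    _ = 2 ^ w * b ^ w := Real.mul_rpow (by norm_num) hb0.le
    _ ≤ 2 ^ |w| * b ^ w := by
        have := Real.rpow_le_rpow_of_exponent_le (by norm_num : (1:ℝ) ≤ 2) (le_abs_self w)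
        exact mul_le_mul_of_nonneg_right this (Real.rpow_nonneg hb0.le w)
  · calc x ^ w ≤ (b / 2) ^ w := Real.rpow_le_rpow_of_nonpos (by linarith) hx hw.le
    _ = b ^ w / 2 ^ w := Real.div_rpow hb0.le (by norm_num : (0:ℝ) ≤ 2) w
    _ = 2 ^ (-w) * b ^ w := by
        rw [Real.rpow_neg (by norm_num : (0:ℝ) ≤ 2)]
        ring
    _ ≤ 2 ^ |w| * b ^ w := by
        have := Real.rpow_le_rpow_of_exponent_le (by norm_num : (1:ℝ) ≤ 2) (neg_le_abs w)
        exact mul_le_mul_of_nonneg_right this (Real.rpow_nonneg hb0.le w)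

private lemma littleO_of_bounds {f g : ℝ → ℝ} {u t : ℝ} (C : ℝ) (hut : u < t)
    (hf : ∀ᶠ b in atTop, 0 ≤ f b ∧ f b ≤ C * b ^ u)
    (hg : ∀ᶠ b in atTop, b ^ t ≤ g b) : f =o[atTop] g := by
  have h1 : f =O[atTop] fun b : ℝ => b ^ u := by
    rw [Asymptotics.isBigO_iff]
    refine ⟨C, ?_⟩
    filter_upwards [hf, eventually_gt_atTop 0] with b hb hb0
    rw [Real.norm_of_nonneg hb.1, Real.norm_of_nonneg (Real.rpow_nonneg hb0.le u)]
    exact hb.2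
  have h2 : (fun b : ℝ => b ^ t) =O[atTop] g := by
    rw [Asymptotics.isBigO_iff]
    refine ⟨1, ?_⟩
    filter_upwards [hg, eventually_gt_atTop 0] with b hb hb0
    have ht0 : (0:ℝ) < b ^ t := Real.rpow_pos_of_pos hb0 t
    rw [Real.norm_of_nonneg ht0.le, Real.norm_of_nonneg (ht0.le.trans hb), one_mul]
    exact hb
  exact (h1.trans_isLittleO (rpow_littleO hut)).trans_isBigO h2

theorem stmt_12 (p r ε Cq : ℝ) (hp : 0 < p) (hr : 0 < r) (hε : 0 < ε) (hε1 : ε < 1)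
    (hCq : 0 < Cq) (q : ℝ → ℝ) (hq : ContDiff ℝ 1 q)
    (hq0 : ∀ x ≥ (1 : ℝ), 0 ≤ q x ∧ q x ≤ Cq * x ^ r)
    (hq1 : ∀ x ≥ (1 : ℝ), |deriv q x| ≤ Cq * x ^ (r - 1))
    (β : ℝ → ℝ) (hβ : ∀ b, 0 < β b)
    (hβgrow : 2 * p ≤ r → ∃ s > r / 2, ∀ᶠ b in atTop, b ^ s ≤ β b) :
    (∀ c > (0 : ℝ), Tendsto (fun b : ℝ =>
        (1 / b ^ (1 - ε) + 1 / ((b ^ p + β b) * (b ^ (1 - ε)) ^ 2))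
          * Real.exp (-(c * (β b / (b ^ p + β b)) * (p * b ^ (p - 1)) * (b ^ (1 - ε)) ^ 2)))
      atTop (nhds 0)) ∧
    ((fun b : ℝ => sSup (q '' Set.Icc (b - b ^ (1 - ε)) (b + b ^ (1 - ε))))
      =o[atTop] fun b => (b ^ p) ^ 2 + (β b) ^ 2) ∧
    ((fun b : ℝ => (b ^ p) ^ 2 * b ^ (-2 : ℝ)
        + sSup ((fun t => |deriv q t|) '' Set.Icc (b - b ^ (1 - ε)) (b + b ^ (1 - ε))))
      =o[atTop] fun b => (b ^ p) ^ 2 + (β b) ^ 2) := by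
  -- eventual geometry: b ≥ 2 and δ = b^(1-ε) ≤ b/2
  have hEv : ∀ᶠ b : ℝ in atTop, 2 ≤ b ∧ b ^ (1 - ε) ≤ b / 2 := by
    have h2 : Tendsto (fun b : ℝ => b ^ (-ε)) atTop (nhds 0) := tendsto_rpow_neg_atTop hε
    filter_upwards [eventually_ge_atTop 2,
      h2.eventually_le_const (show (0:ℝ) < 1/2 by norm_num)] with b hb hlt
    have hb0 : (0 : ℝ) < b := by linarith
    refine ⟨hb, ?_⟩
    have : b ^ (1 - ε) = b * b ^ (-ε) := by
      rw [show (1 - ε) = 1 + (-ε) by ring, Real.rpow_add hb0, Real.rpow_one]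
    rw [this]
    calc b * b ^ (-ε) ≤ b * (1/2) := mul_le_mul_of_nonneg_left hlt hb0.le
    _ = b / 2 := by ring
  -- Sublemma A: ∃ t > r with b^t ≤ (b^p)^2 + (β b)^2 eventually
  have hA : ∃ t > r, ∀ᶠ b : ℝ in atTop, b ^ t ≤ (b ^ p) ^ 2 + (β b) ^ 2 := by
    by_cases hcase : 2 * p ≤ r
    · obtain ⟨s, hs, hev⟩ := hβgrow hcase
      refine ⟨2 * s, by linarith, ?_⟩
      filter_upwards [hev, eventually_gt_atTop 0] with b h1 h2
      have hbs : (0:ℝ) ≤ b ^ s := Real.rpow_nonneg h2.le s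
      have : b ^ (2 * s) = (b ^ s) ^ 2 := by
        rw [show 2 * s = s + s by ring, Real.rpow_add h2, sq]
      rw [this]
      have : (b ^ s) ^ 2 ≤ (β b) ^ 2 := by
        apply pow_le_pow_left₀ hbs h1 2
      nlinarith [sq_nonneg (b ^ p)]
    · push_neg at hcase
      refine ⟨(r + 2 * p) / 2, by linarith, ?_⟩
      filter_upwards [eventually_ge_atTop 1] with b hb
      have hb0 : (0:ℝ) < b := by linarith
      have h1 : b ^ ((r + 2 * p) / 2) ≤ b ^ (2 * p) :=
        Real.rpow_le_rpow_of_exponent_le hb (by linarith)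
      have h2 : b ^ (2 * p) = (b ^ p) ^ 2 := by
        rw [show 2 * p = p + p by ring, Real.rpow_add hb0, sq]
      nlinarith [sq_nonneg (β b)]
  obtain ⟨t, hrt, htev⟩ := hA
  -- bounds on the interval suprema, eventually
  have hsupq : ∀ᶠ b : ℝ in atTop,
      (0 ≤ sSup (q '' Set.Icc (b - b ^ (1-ε)) (b + b ^ (1-ε))) ∧
       sSup (q '' Set.Icc (b - b ^ (1-ε)) (b + b ^ (1-ε))) ≤ (Cq * 2 ^ |r|) * b ^ r) ∧
      (0 ≤ sSup ((fun t => |deriv q t|) '' Set.Icc (b - b ^ (1-ε)) (b + b ^ (1-ε))) ∧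
       sSup ((fun t => |deriv q t|) '' Set.Icc (b - b ^ (1-ε)) (b + b ^ (1-ε)))
         ≤ (Cq * 2 ^ |r - 1|) * b ^ (r - 1)) := by
    filter_upwards [hEv] with b hb
    obtain ⟨hb2, hδ⟩ := hb
    have hb0 : (0:ℝ) < b := by linarith
    have hb1 : (1:ℝ) ≤ b := by linarith
    have hsub : Set.Icc (b - b ^ (1-ε)) (b + b ^ (1-ε)) ⊆ Set.Icc (b/2) (2*b) := by
      intro x hx
      obtain ⟨hx1, hx2⟩ := hx
      have hδ0 : (0:ℝ) ≤ b ^ (1-ε) := Real.rpow_nonneg hb0.le _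
      constructor <;> [linarith; linarith]
    have hone : ∀ x ∈ Set.Icc (b - b ^ (1-ε)) (b + b ^ (1-ε)), (1:ℝ) ≤ x := by
      intro x hx
      have := (hsub hx).1
      linarith
    constructor
    · constructor
      · apply Real.sSup_nonneg
        rintro y ⟨x, hx, rfl⟩
        exact (hq0 x (hone x hx)).1
      · apply Real.sSup_le
        · rintro y ⟨x, hx, rfl⟩
          have h1 := (hq0 x (hone x hx)).2
          have h2 : x ^ r ≤ 2 ^ |r| * b ^ r :=
            rpow_interval_bound hb1 (hsub hx).1 (hsub hx).2
          calc q x ≤ Cq * x ^ r := h1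
          _ ≤ Cq * (2 ^ |r| * b ^ r) := by
              exact mul_le_mul_of_nonneg_left h2 hCq.le
          _ = (Cq * 2 ^ |r|) * b ^ r := by ring
        · positivity
    · constructor
      · apply Real.sSup_nonneg
        rintro y ⟨x, _, rfl⟩
        exact abs_nonneg _
      · apply Real.sSup_le
        · rintro y ⟨x, hx, rfl⟩
          have h1 := hq1 x (hone x hx)
          have h2 : x ^ (r-1) ≤ 2 ^ |r-1| * b ^ (r-1) :=
            rpow_interval_bound hb1 (hsub hx).1 (hsub hx).2
          calc |deriv q x| ≤ Cq * x ^ (r-1) := h1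
          _ ≤ Cq * (2 ^ |r-1| * b ^ (r-1)) := mul_le_mul_of_nonneg_left h2 hCq.le
          _ = (Cq * 2 ^ |r-1|) * b ^ (r-1) := by ring
        · positivity
  refine ⟨?_, ?_, ?_⟩
  · -- part (i)
    intro c hc
    apply squeeze_zero' (t₀ := atTop)
      (g := fun b : ℝ => b ^ (-(1-ε)) + b ^ (-(p + 2 - 2*ε)))
    · filter_upwards [eventually_gt_atTop 0] with b hb0
      have hβb := hβ b
      have hbp : (0:ℝ) < b ^ p := Real.rpow_pos_of_pos hb0 p
      have hδ : (0:ℝ) < b ^ (1-ε) := Real.rpow_pos_of_pos hb0 _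
      positivity
    · filter_upwards [eventually_gt_atTop 0] with b hb0
      have hβb := hβ b
      have hbp : (0:ℝ) < b ^ p := Real.rpow_pos_of_pos hb0 p
      have hδ : (0:ℝ) < b ^ (1-ε) := Real.rpow_pos_of_pos hb0 _
      have hbp1 : (0:ℝ) < b ^ (p-1) := Real.rpow_pos_of_pos hb0 _
      have hexp : Real.exp (-(c * (β b / (b ^ p + β b)) * (p * b ^ (p - 1))
          * (b ^ (1 - ε)) ^ 2)) ≤ 1 := by
        rw [Real.exp_le_one_iff]
        have : 0 ≤ c * (β b / (b ^ p + β b)) * (p * b ^ (p - 1)) * (b ^ (1 - ε)) ^ 2 := by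
          positivity
        linarith
      have hpre : 1 / b ^ (1 - ε) + 1 / ((b ^ p + β b) * (b ^ (1 - ε)) ^ 2)
          ≤ b ^ (-(1-ε)) + b ^ (-(p + 2 - 2*ε)) := by
        have e1 : 1 / b ^ (1 - ε) = b ^ (-(1-ε)) := by
          rw [Real.rpow_neg hb0.le, one_div]
        have hδ2 : (b ^ (1-ε) : ℝ) ^ 2 = b ^ (2 - 2*ε) := by
          rw [sq, ← Real.rpow_add hb0]; ring_nf
        have e2 : 1 / ((b ^ p + β b) * (b ^ (1 - ε)) ^ 2) ≤ b ^ (-(p + 2 - 2*ε)) := by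
          have hle : b ^ (p + 2 - 2*ε) ≤ (b ^ p + β b) * (b ^ (1 - ε)) ^ 2 := by
            rw [hδ2, show p + 2 - 2*ε = p + (2 - 2*ε) by ring, Real.rpow_add hb0]
            have h22 : (0:ℝ) < b ^ (2 - 2*ε) := Real.rpow_pos_of_pos hb0 _
            nlinarith
          rw [Real.rpow_neg hb0.le, ← one_div]
          apply one_div_le_one_div_of_le (Real.rpow_pos_of_pos hb0 _) hle
        linarith
      have hnn : (0:ℝ) ≤ 1 / b ^ (1 - ε) + 1 / ((b ^ p + β b) * (b ^ (1 - ε)) ^ 2) := by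
        positivity
      calc (1 / b ^ (1 - ε) + 1 / ((b ^ p + β b) * (b ^ (1 - ε)) ^ 2))
            * Real.exp (-(c * (β b / (b ^ p + β b)) * (p * b ^ (p - 1)) * (b ^ (1 - ε)) ^ 2))
          ≤ (1 / b ^ (1 - ε) + 1 / ((b ^ p + β b) * (b ^ (1 - ε)) ^ 2)) * 1 :=
            mul_le_mul_of_nonneg_left hexp hnn
        _ = 1 / b ^ (1 - ε) + 1 / ((b ^ p + β b) * (b ^ (1 - ε)) ^ 2) := by ring
        _ ≤ b ^ (-(1-ε)) + b ^ (-(p + 2 - 2*ε)) := hpre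
    · have t1 := tendsto_rpow_neg_atTop (show (0:ℝ) < 1 - ε by linarith)
      have t2 := tendsto_rpow_neg_atTop (show (0:ℝ) < p + 2 - 2*ε by linarith)
      simpa using t1.add t2
  · -- part (ii)
    apply littleO_of_bounds (Cq * 2 ^ |r|) hrt
    · filter_upwards [hsupq] with b hb
      exact hb.1
    · exact htev
  · -- part (iii)
    have h1 : (fun b : ℝ => (b ^ p) ^ 2 * b ^ (-2 : ℝ))
        =o[atTop] fun b => (b ^ p) ^ 2 + (β b) ^ 2 := by
      apply littleO_of_bounds (1 : ℝ) (show 2*p - 2 < 2*p by linarith)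
      · filter_upwards [eventually_gt_atTop 0] with b hb0
        have heq : (b ^ p) ^ 2 * b ^ (-2 : ℝ) = b ^ (2*p - 2) := by
          rw [sq, ← Real.rpow_add hb0, ← Real.rpow_add hb0]
          ring_nf
        rw [heq, one_mul]
        exact ⟨(Real.rpow_pos_of_pos hb0 _).le, le_refl _⟩
      · filter_upwards [eventually_gt_atTop 0] with b hb0
        have : b ^ (2*p) = (b ^ p) ^ 2 := by
          rw [show 2*p = p + p by ring, Real.rpow_add hb0, sq]
        nlinarith [sq_nonneg (β b)]
    have h2 : (fun b : ℝ => sSup ((fun t => |deriv q t|)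
        '' Set.Icc (b - b ^ (1 - ε)) (b + b ^ (1 - ε))))
        =o[atTop] fun b => (b ^ p) ^ 2 + (β b) ^ 2 := by
      apply littleO_of_bounds (Cq * 2 ^ |r - 1|) (show r - 1 < t by linarith)
      · filter_upwards [hsupq] with b hb
        exact hb.2
      · exact htev
    exact h1.add h2
end

section
/- For the monomial damping a(x) = x^{2m} (m ∈ ℕ) with q = 0, and for every N ∈ ℕ, choosing n large enough (n ≥ (2mN+2)/(2m+1)+1 suffices) the rate κ₂(b) = α b^{−(n+1)}/(α+β)^n + Σ_{k=1}^{n−1} b^{−(n+k+1)}α²/(α+β)^{n+1+k} with α = b^{2m}, ν = −1 satisfies κ₂(b) = O(α^{−N}) whenever β ≥ α^{−1/(2m)+ε'} for some ε' > 0; i.e. the pseudomode error decays faster than any prescribed inverse power of |Re λ|. -/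
open Filter Asymptotics

/-! Writing `α = b ^ (2m)`, every summand of `κ₂` has the form `b ^ e * α ^ i / (α + β) ^ j`.
Since `α + β ≥ α`, such a term is at most `b ^ (e + 2m (i - j))`, and the lower bound on `n` makes
each of these exponents at most `-2mN`, so every summand, hence `κ₂`, is `O(α ^ (-N))`. -/

lemma rpow_mul_pow_div_pow_le {b c A : ℝ} (hb : 0 < b) (hA : b ^ c ≤ A) (e : ℝ) (i j : ℕ) :
    b ^ e * (b ^ c) ^ i / A ^ j ≤ b ^ (e + c * i - c * j) := by
  have hbc : 0 < b ^ c := Real.rpow_pos_of_pos hb c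
  have hpow : ∀ k : ℕ, (b ^ c) ^ k = b ^ (c * k) := fun k => by
    rw [← Real.rpow_natCast, ← Real.rpow_mul hb.le]
  calc b ^ e * (b ^ c) ^ i / A ^ j ≤ b ^ e * (b ^ c) ^ i / (b ^ c) ^ j := by
        gcongr
    _ = b ^ (e + c * i - c * j) := by
        rw [hpow, hpow, ← Real.rpow_add hb, ← Real.rpow_sub hb]

lemma isBigO_rpow_mul_pow_div_pow {c e d : ℝ} {A : ℝ → ℝ} (hA : ∀ᶠ b in atTop, b ^ c ≤ A b)
    (i j : ℕ) (h : e + c * i - c * j ≤ d) :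
    (fun b => b ^ e * (b ^ c) ^ i / A b ^ j) =O[atTop] fun b => b ^ d := by
  refine IsBigO.of_bound 1 ?_
  filter_upwards [hA, eventually_ge_atTop 1] with b hAb hb
  have hb0 : 0 < b := one_pos.trans_le hb
  have hApos : 0 < A b := (Real.rpow_pos_of_pos hb0 c).trans_le hAb
  rw [one_mul, Real.norm_of_nonneg (by positivity), Real.norm_of_nonneg (by positivity)]
  exact (rpow_mul_pow_div_pow_le hb0 hAb e i j).trans (Real.rpow_le_rpow_of_exponent_le hb h)

theorem stmt_19_general (m : ℕ) (β : ℝ → ℝ) (hβpos : ∀ b, 0 < β b) (N : ℕ) :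
    ∀ n : ℕ, (2 * (m : ℝ) * N + 2) / (2 * (m : ℝ) + 1) + 1 ≤ n →
      (fun b : ℝ => b ^ (2 * (m : ℝ)) * b ^ (-((n : ℝ) + 1))
            / (b ^ (2 * (m : ℝ)) + β b) ^ n
          + ∑ k ∈ Finset.Icc 1 (n - 1),
              b ^ (-((n : ℝ) + k + 1)) * (b ^ (2 * (m : ℝ))) ^ 2
                / (b ^ (2 * (m : ℝ)) + β b) ^ (n + 1 + k))
        =O[atTop] fun b : ℝ => (b ^ (2 * (m : ℝ))) ^ (-(N : ℝ)) := by
  intro n hn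
  have hn' : 2 * (m : ℝ) * N + 2 ≤ (2 * m + 1) * (n - 1) := by
    rw [← div_le_iff₀' (by positivity)]
    linarith
  have hm0 : (0 : ℝ) ≤ m := m.cast_nonneg
  have hA : ∀ᶠ b in atTop, b ^ (2 * (m : ℝ)) ≤ b ^ (2 * (m : ℝ)) + β b :=
    Eventually.of_forall fun b => le_add_of_nonneg_right (hβpos b).le
  have hfirst := isBigO_rpow_mul_pow_div_pow hA (e := -((n : ℝ) + 1)) (d := 2 * m * -(N : ℝ))
    1 n (by push_cast; nlinarith)
  have hsum : ∀ k ∈ Finset.Icc 1 (n - 1), _ := fun k hk =>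
    isBigO_rpow_mul_pow_div_pow hA (e := -((n : ℝ) + k + 1)) (d := 2 * m * -(N : ℝ)) 2 (n + 1 + k)
      (by
        have hk : (1 : ℝ) ≤ k := by exact_mod_cast (Finset.mem_Icc.mp hk).1
        push_cast; nlinarith)
  have htarget : (fun b : ℝ => b ^ (2 * (m : ℝ) * -(N : ℝ))) =ᶠ[atTop]
      fun b => (b ^ (2 * (m : ℝ))) ^ (-(N : ℝ)) := by
    filter_upwards [eventually_ge_atTop 0] with b hb using Real.rpow_mul hb _ _
  refine ((hfirst.congr_left fun b => ?_).add (IsBigO.fun_sum hsum)).trans_eventuallyEq htarget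
  rw [pow_one, mul_comm]

theorem stmt_19 (m : ℕ) (hm : 0 < m) (ε' : ℝ) (hε' : 0 < ε')
    (β : ℝ → ℝ) (hβpos : ∀ b, 0 < β b)
    (hβ : ∀ᶠ b in atTop, (b : ℝ) ^ (-1 + 2 * (m : ℝ) * ε') ≤ β b) (N : ℕ) :
    ∀ n : ℕ, (2 * (m : ℝ) * N + 2) / (2 * (m : ℝ) + 1) + 1 ≤ n →
      (fun b : ℝ => b ^ (2 * (m : ℝ)) * b ^ (-((n : ℝ) + 1))
            / (b ^ (2 * (m : ℝ)) + β b) ^ n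
          + ∑ k ∈ Finset.Icc 1 (n - 1),
              b ^ (-((n : ℝ) + k + 1)) * (b ^ (2 * (m : ℝ))) ^ 2
                / (b ^ (2 * (m : ℝ)) + β b) ^ (n + 1 + k))
        =O[atTop] fun b : ℝ => (b ^ (2 * (m : ℝ))) ^ (-(N : ℝ)) :=
  stmt_19_general m β hβpos N
end
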